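/- arXiv:2002.07937 — 2 statements merged into one kernel-verified Lean document; each statement's English description precedes it below -/
import Mathlib

section
/- (Maximum principle on an unbounded domain) Let Ω = ℝᵈ × [0,T] and let a satisfy a_0 ≤ a(x,t) ≤ ε(|x|)|x|² + C with ε(r) → 0 as r → ∞ and a_0 > 0. If v ∈ C^{2,1}(Ω) is bounded above, satisfies ∂v/∂t − a Δv ≤ 0 in Ω, then v(x,t) ≤ sup_x v(x,0) for all (x,t) ∈ Ω. -/
/-!
Perturb `v` by the barrier `η e^{k t} H(x)` with `H(x) = 1 + ((|x|² - b)₊)³`. Since `H` is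
constant on `|x|² ≤ b`, the uncontrolled values of `a` there do not matter, while for `|x|² > b`
the growth bound gives `a ≤ |x|² + C`, and then `a ΔH ≤ k H` because both sides are cubic in
`|x|²`. Taking the rate `k` slightly larger makes `v - η e^{k t} H` a strict subsolution, so on a
cylinder `B_R × [0, T]` it attains its maximum on the parabolic boundary; since `H → ∞`, for `R`
large this maximum is at most `sup v(·, 0)`. Letting `η → 0` gives the claim.
-/

noncomputable def pd {d : ℕ} (f : EuclideanSpace ℝ (Fin d) → ℝ) (i : Fin d)
    (x : EuclideanSpace ℝ (Fin d)) : ℝ :=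
  fderiv ℝ f x (EuclideanSpace.single i 1)

noncomputable def lap {d : ℕ} (f : EuclideanSpace ℝ (Fin d) → ℝ)
    (x : EuclideanSpace ℝ (Fin d)) : ℝ :=
  ∑ i : Fin d, pd (fun y => pd f i y) i x

noncomputable def gradSq {d : ℕ} (f : EuclideanSpace ℝ (Fin d) → ℝ)
    (x : EuclideanSpace ℝ (Fin d)) : ℝ :=
  ∑ i : Fin d, (pd f i x) ^ 2

noncomputable def dt {d : ℕ} (f : EuclideanSpace ℝ (Fin d) → ℝ → ℝ)
    (x : EuclideanSpace ℝ (Fin d)) (t : ℝ) : ℝ :=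
  deriv (fun s => f x s) t

open Filter Set Topology

theorem hasDerivAt_max_zero_pow (n : ℕ) (x : ℝ) :
    HasDerivAt (fun s : ℝ => max s 0 ^ (n + 2)) ((n + 2) * max x 0 ^ (n + 1)) x := by
  rcases lt_trichotomy x 0 with hx | rfl | hx
  · have hzero : (fun s : ℝ => max s 0 ^ (n + 2)) =ᶠ[𝓝 x] fun _ => 0 := by
      filter_upwards [eventually_lt_nhds hx] with s hs
      simp [max_eq_right hs.le]
    simpa [max_eq_right hx.le] using (hasDerivAt_const x (0 : ℝ)).congr_of_eventuallyEq hzero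
  · rw [hasDerivAt_iff_isLittleO_nhds_zero]
    refine (Asymptotics.IsBigO.of_bound 1 ?_).trans_isLittleO
      (Asymptotics.isLittleO_pow_id (n := n + 2) (by omega))
    filter_upwards with h
    rcases le_total h 0 with hh | hh <;> simp [hh]
  · have hpow : (fun s : ℝ => max s 0 ^ (n + 2)) =ᶠ[𝓝 x] fun s => s ^ (n + 2) := by
      filter_upwards [eventually_gt_nhds hx] with s hs
      rw [max_eq_left hs.le]
    simpa [max_eq_left hx.le] using (hasDerivAt_pow (n + 2) x).congr_of_eventuallyEq hpow

theorem IsLocalMax.deriv_deriv_nonpos {f : ℝ → ℝ} {x : ℝ} (h : IsLocalMax f x)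
    (hc : ContinuousAt f x) : deriv (deriv f) x ≤ 0 := by
  by_contra! hpos
  have hmin := isLocalMin_of_deriv_deriv_pos hpos h.deriv_eq_zero hc
  have hconst : f =ᶠ[𝓝 x] fun _ => f x := by
    filter_upwards [h, hmin] with y hmax hmin using le_antisymm hmax hmin
  have := hconst.deriv.deriv_eq
  simp [this] at hpos

theorem IsMaxOn.hasDerivAt_nonneg {f : ℝ → ℝ} {f' a b : ℝ} (h : IsMaxOn f (Icc a b) b)
    (hab : a < b) (hf : HasDerivAt f f' b) : 0 ≤ f' := by
  have hcone : a - b ∈ posTangentConeAt (Icc a b) b :=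
    sub_mem_posTangentConeAt_of_segment_subset (by rw [segment_symm, segment_eq_Icc hab.le])
  have := h.localize.hasFDerivWithinAt_nonpos hf.hasDerivWithinAt hcone
  rw [ContinuousLinearMap.toSpanSingleton_apply, smul_eq_mul] at this
  exact nonneg_of_mul_nonpos_right this (by linarith)

theorem contDiff_two_of_hasDerivAt {φ φ' φ'' : ℝ → ℝ} (hφ : ∀ s, HasDerivAt φ (φ' s) s)
    (hφ' : ∀ s, HasDerivAt φ' (φ'' s) s) (hφ'' : Continuous φ'') : ContDiff ℝ 2 φ := by
  have hderiv : deriv φ = φ' := funext fun s => (hφ s).deriv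
  have hderiv' : deriv φ' = φ'' := funext fun s => (hφ' s).deriv
  refine contDiff_succ_iff_deriv (n := 1).2 ⟨fun s => (hφ s).differentiableAt, by simp, ?_⟩
  rw [hderiv, contDiff_one_iff_deriv, hderiv']
  exact ⟨fun s => (hφ' s).differentiableAt, hφ''⟩

theorem ContDiff.differentiable_fderiv_apply {E : Type*} [NormedAddCommGroup E] [NormedSpace ℝ E]
    {f : E → ℝ} (hf : ContDiff ℝ 2 f) (v : E) :
    Differentiable ℝ (fun y => fderiv ℝ f y v) :=
  ((hf.fderiv_right (m := 1) (by norm_num)).clm_apply contDiff_const).differentiable one_ne_zero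

theorem IsLocalMax.fderiv_fderiv_apply_nonpos {E : Type*} [NormedAddCommGroup E]
    [NormedSpace ℝ E] {f : E → ℝ} {x : E} (h : IsLocalMax f x) (hf : ContDiff ℝ 2 f) (v : E) :
    fderiv ℝ (fun y => fderiv ℝ f y v) x v ≤ 0 := by
  have hline (s : ℝ) : HasDerivAt (fun s : ℝ => x + s • v) v s := by
    simpa using ((hasDerivAt_id s).smul_const v).const_add x
  have hderiv : deriv (fun s : ℝ => f (x + s • v)) = fun s => fderiv ℝ f (x + s • v) v := by
    funext s
    exact ((hf.differentiable two_ne_zero _).hasFDerivAt.comp_hasDerivAt s (hline s)).deriv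
  have hderiv2 : deriv (fun s : ℝ => fderiv ℝ f (x + s • v) v) 0 =
      fderiv ℝ (fun y => fderiv ℝ f y v) x v := by
    have := ((hf.differentiable_fderiv_apply v _).hasFDerivAt.comp_hasDerivAt 0 (hline 0))
    simpa [Function.comp_def] using this.deriv
  have hmax : IsLocalMax (fun s : ℝ => f (x + s • v)) 0 :=
    IsLocalMax.comp_continuous (by simpa using h) (hline 0).continuousAt
  rw [← hderiv2, ← hderiv]
  exact hmax.deriv_deriv_nonpos (hf.continuous.continuousAt.comp (hline 0).continuousAt)

section Laplacian

variable {d : ℕ} {f g : EuclideanSpace ℝ (Fin d) → ℝ} {x : EuclideanSpace ℝ (Fin d)}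

theorem pd_sub (hf : DifferentiableAt ℝ f x) (hg : DifferentiableAt ℝ g x) (i : Fin d) :
    pd (fun y => f y - g y) i x = pd f i x - pd g i x := by
  simp [pd, fderiv_fun_sub hf hg]

theorem pd_const_mul (c : ℝ) (hf : DifferentiableAt ℝ f x) (i : Fin d) :
    pd (fun y => c * f y) i x = c * pd f i x := by
  simp [pd, fderiv_const_mul hf]

theorem lap_sub (hf : ContDiff ℝ 2 f) (hg : ContDiff ℝ 2 g) :
    lap (fun y => f y - g y) x = lap f x - lap g x := by
  rw [lap, lap, lap, ← Finset.sum_sub_distrib]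
  refine Finset.sum_congr rfl fun i _ => ?_
  have hpd : (fun y => pd (fun y => f y - g y) i y) = fun y => pd f i y - pd g i y :=
    funext fun y => pd_sub (hf.differentiable two_ne_zero y) (hg.differentiable two_ne_zero y) i
  rw [hpd]
  exact pd_sub (hf.differentiable_fderiv_apply _ x) (hg.differentiable_fderiv_apply _ x) i

theorem lap_const_mul (c : ℝ) (hf : ContDiff ℝ 2 f) :
    lap (fun y => c * f y) x = c * lap f x := by
  rw [lap, lap, Finset.mul_sum]
  refine Finset.sum_congr rfl fun i _ => ?_
  have hpd : (fun y => pd (fun y => c * f y) i y) = fun y => c * pd f i y :=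
    funext fun y => pd_const_mul c (hf.differentiable two_ne_zero y) i
  rw [hpd]
  exact pd_const_mul c (hf.differentiable_fderiv_apply _ x) i

theorem IsLocalMax.lap_nonpos (h : IsLocalMax f x) (hf : ContDiff ℝ 2 f) : lap f x ≤ 0 :=
  Finset.sum_nonpos fun _ _ => h.fderiv_fderiv_apply_nonpos hf _

theorem lap_le_of_isLocalMax_sub (hf : ContDiff ℝ 2 f) (hg : ContDiff ℝ 2 g)
    (h : IsLocalMax (fun y => f y - g y) x) : lap f x ≤ lap g x := by
  have := h.lap_nonpos (hf.sub hg)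
  rw [lap_sub hf hg] at this
  linarith

end Laplacian

section Radial

variable {d : ℕ} {φ φ' φ'' : ℝ → ℝ}

theorem hasFDerivAt_comp_norm_sq (hφ : ∀ s, HasDerivAt φ (φ' s) s)
    (y : EuclideanSpace ℝ (Fin d)) :
    HasFDerivAt (fun x : EuclideanSpace ℝ (Fin d) => φ (‖x‖ ^ 2))
      (φ' (‖y‖ ^ 2) • (2 : ℕ) • innerSL ℝ y) y :=
  (hφ _).comp_hasFDerivAt y (hasStrictFDerivAt_norm_sq y).hasFDerivAt

theorem pd_comp_norm_sq (hφ : ∀ s, HasDerivAt φ (φ' s) s) (i : Fin d)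
    (y : EuclideanSpace ℝ (Fin d)) :
    pd (fun x => φ (‖x‖ ^ 2)) i y = φ' (‖y‖ ^ 2) * (2 * y i) := by
  simp [pd, (hasFDerivAt_comp_norm_sq hφ y).fderiv, EuclideanSpace.inner_single_right]

theorem lap_comp_norm_sq (hφ : ∀ s, HasDerivAt φ (φ' s) s)
    (hφ' : ∀ s, HasDerivAt φ' (φ'' s) s) (x : EuclideanSpace ℝ (Fin d)) :
    lap (fun x => φ (‖x‖ ^ 2)) x = φ'' (‖x‖ ^ 2) * (4 * ‖x‖ ^ 2) + φ' (‖x‖ ^ 2) * (2 * d) := by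
  have hterm (i : Fin d) : pd (fun y => pd (fun x => φ (‖x‖ ^ 2)) i y) i x =
      φ'' (‖x‖ ^ 2) * (2 * x i) * (2 * x i) + φ' (‖x‖ ^ 2) * 2 := by
    have hprod : HasFDerivAt (fun y : EuclideanSpace ℝ (Fin d) => φ' (‖y‖ ^ 2) * (2 * y i)) _ x :=
      (hasFDerivAt_comp_norm_sq hφ' x).fun_mul
      ((EuclideanSpace.proj (𝕜 := ℝ) i).hasFDerivAt.const_mul (2 : ℝ))
    rw [show (fun y => pd (fun x => φ (‖x‖ ^ 2)) i y) = fun y => φ' (‖y‖ ^ 2) * (2 * y i) from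
      funext (pd_comp_norm_sq hφ i), pd, hprod.fderiv]
    simp [EuclideanSpace.inner_single_right]
    ring
  have hnorm : 4 * ‖x‖ ^ 2 = ∑ i, 2 * x i * (2 * x i) := by
    rw [EuclideanSpace.norm_sq_eq, Finset.mul_sum]
    exact Finset.sum_congr rfl fun i _ => by rw [Real.norm_eq_abs, sq_abs]; ring
  rw [lap, Finset.sum_congr rfl fun i _ => hterm i, Finset.sum_add_distrib, hnorm, Finset.mul_sum]
  simp [mul_assoc, mul_comm]

end Radial

noncomputable def barrierProfile (b s : ℝ) : ℝ := 1 + max (s - b) 0 ^ 3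

noncomputable def radialBarrier {d : ℕ} (b : ℝ) (x : EuclideanSpace ℝ (Fin d)) : ℝ :=
  barrierProfile b (‖x‖ ^ 2)

section RadialBarrier

variable {d : ℕ} {b : ℝ}

theorem hasDerivAt_max_sub_pow (n : ℕ) (b s : ℝ) :
    HasDerivAt (fun s : ℝ => max (s - b) 0 ^ (n + 2)) ((n + 2) * max (s - b) 0 ^ (n + 1)) s := by
  simpa [Function.comp_def] using
    (hasDerivAt_max_zero_pow n (s - b)).comp s ((hasDerivAt_id s).sub_const b)

theorem hasDerivAt_barrierProfile (b s : ℝ) :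
    HasDerivAt (barrierProfile b) (3 * max (s - b) 0 ^ 2) s :=
  ((hasDerivAt_max_sub_pow 1 b s).const_add 1).congr_deriv (by norm_num)

theorem hasDerivAt_three_mul_max_sub_sq (b s : ℝ) :
    HasDerivAt (fun s : ℝ => 3 * max (s - b) 0 ^ 2) (6 * max (s - b) 0) s :=
  ((hasDerivAt_max_sub_pow 0 b s).const_mul 3).congr_deriv (by push_cast; ring)

theorem radialBarrier_pos (b : ℝ) (x : EuclideanSpace ℝ (Fin d)) : 0 < radialBarrier b x := by
  unfold radialBarrier barrierProfile
  positivity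

theorem contDiff_radialBarrier (b : ℝ) : ContDiff ℝ 2 (radialBarrier (d := d) b) :=
  (contDiff_two_of_hasDerivAt (hasDerivAt_barrierProfile b) (hasDerivAt_three_mul_max_sub_sq b)
    (by fun_prop)).comp (contDiff_norm_sq ℝ)

theorem tendsto_radialBarrier (b : ℝ) :
    Tendsto (radialBarrier (d := d) b) (Bornology.cobounded _) atTop := by
  have hprofile : Tendsto (fun r : ℝ => barrierProfile b (r ^ 2)) atTop atTop := by
    refine tendsto_atTop_add_const_left _ 1 ((tendsto_pow_atTop (by norm_num)).comp ?_)
    exact tendsto_atTop_mono (fun r => le_max_left _ _)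
      (tendsto_atTop_add_const_right _ (-b) (tendsto_pow_atTop two_ne_zero))
  exact hprofile.comp tendsto_norm_cobounded_atTop

theorem lap_radialBarrier (b : ℝ) (x : EuclideanSpace ℝ (Fin d)) :
    lap (radialBarrier b) x =
      6 * max (‖x‖ ^ 2 - b) 0 * (4 * ‖x‖ ^ 2) + 3 * max (‖x‖ ^ 2 - b) 0 ^ 2 * (2 * d) :=
  lap_comp_norm_sq (hasDerivAt_barrierProfile b) (hasDerivAt_three_mul_max_sub_sq b) x

theorem mul_lap_radialBarrier_le {a C : ℝ} {x : EuclideanSpace ℝ (Fin d)} (hb : 0 ≤ b)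
    (hC : 0 ≤ C) (hax : b < ‖x‖ ^ 2 → a ≤ ‖x‖ ^ 2 + C) :
    a * lap (radialBarrier b) x ≤ (24 + 6 * d) * (2 + b + C) ^ 2 * radialBarrier b x := by
  rw [lap_radialBarrier, radialBarrier, barrierProfile]
  rcases le_or_gt (‖x‖ ^ 2) b with hx | hx
  · rw [max_eq_right (sub_nonpos.2 hx)]
    ring_nf
    positivity
  set u := ‖x‖ ^ 2 - b with hu
  have hu0 : 0 < u := sub_pos.2 hx
  rw [max_eq_left hu0.le]
  have hnorm : ‖x‖ ^ 2 = u + b := by rw [hu]; ring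
  set m := 1 + b + C with hm_def
  have hcubic : u * (u + m) ^ 2 ≤ (1 + m) ^ 2 * (1 + u ^ 3) := by
    have hu1 : u ≤ 1 + u ^ 3 := by nlinarith [sq_nonneg (u - 1), sq_nonneg u]
    have hu2 : u ^ 2 ≤ 1 + u ^ 3 := by nlinarith [sq_nonneg (u - 1), sq_nonneg u]
    nlinarith [mul_le_mul_of_nonneg_left hu2 (by positivity : 0 ≤ 2 * m),
      mul_le_mul_of_nonneg_left hu1 (by positivity : 0 ≤ m ^ 2)]
  calc a * (6 * u * (4 * ‖x‖ ^ 2) + 3 * u ^ 2 * (2 * d))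
      ≤ (u + m) * ((24 + 6 * d) * (u * (u + m))) := by
        gcongr
        · linarith [hax hx]
        · rw [hnorm]
          nlinarith [mul_nonneg hu0.le (Nat.cast_nonneg d : (0 : ℝ) ≤ d)]
    _ = (24 + 6 * d) * (u * (u + m) ^ 2) := by ring
    _ ≤ (24 + 6 * d) * ((1 + m) ^ 2 * (1 + u ^ 3)) :=
        mul_le_mul_of_nonneg_left hcubic (by positivity)
    _ = _ := by rw [hm_def]; ring

end RadialBarrier

section MaximumPrinciple

variable {d : ℕ} {T k S : ℝ} {a v : EuclideanSpace ℝ (Fin d) → ℝ → ℝ}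
  {H : EuclideanSpace ℝ (Fin d) → ℝ}

theorem no_interior_max_sub_barrier
    (ha : ∀ x, ∀ t ∈ Icc 0 T, 0 ≤ a x t)
    (hx2 : ∀ t ∈ Icc 0 T, ContDiff ℝ 2 (fun y => v y t))
    (ht1 : ∀ x, ∀ t ∈ Icc 0 T, DifferentiableAt ℝ (fun s => v x s) t)
    (hL : ∀ x, ∀ t ∈ Icc 0 T, dt v x t - a x t * lap (fun y => v y t) x ≤ 0)
    (hH : ContDiff ℝ 2 H) (hbar : ∀ x, ∀ t ∈ Icc 0 T, a x t * lap H x < k * H x)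
    {η : ℝ} (hη : 0 < η) {x : EuclideanSpace ℝ (Fin d)} {t : ℝ} (ht : t ∈ Ioc 0 T)
    (hspace : IsLocalMax (fun y => v y t - η * Real.exp (k * t) * H y) x)
    (htime : IsMaxOn (fun s => v x s - η * Real.exp (k * s) * H x) (Icc 0 t) t) : False := by
  have htT : t ∈ Icc 0 T := Ioc_subset_Icc_self ht
  set c := η * Real.exp (k * t) with hc_def
  have hc : 0 < c := by positivity
  have htime' : 0 ≤ dt v x t - c * k * H x := by
    refine htime.hasDerivAt_nonneg ht.1 ?_
    have hexp := (((hasDerivAt_id t).const_mul k).exp.const_mul η).mul_const (H x)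
    exact ((ht1 x t htT).hasDerivAt.sub hexp).congr_deriv (by rw [dt, hc_def, id]; ring)
  have hspace' : lap (fun y => v y t) x ≤ c * lap H x := by
    rw [← lap_const_mul c hH]
    exact lap_le_of_isLocalMax_sub (hx2 t htT) (contDiff_const.mul hH) hspace
  have hsub : a x t * lap (fun y => v y t) x ≤ c * (a x t * lap H x) := by
    calc a x t * lap (fun y => v y t) x ≤ a x t * (c * lap H x) :=
          mul_le_mul_of_nonneg_left hspace' (ha x t htT)
      _ = c * (a x t * lap H x) := by ring
  have hstrict := mul_lt_mul_of_pos_left (hbar x t htT) hc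
  linarith [hL x t htT]

theorem le_add_barrier
    (hcont : Continuous (fun p : EuclideanSpace ℝ (Fin d) × ℝ => v p.1 p.2))
    (hx2 : ∀ t ∈ Icc 0 T, ContDiff ℝ 2 (fun y => v y t))
    (ht1 : ∀ x, ∀ t ∈ Icc 0 T, DifferentiableAt ℝ (fun s => v x s) t)
    {M : ℝ} (habove : ∀ x, ∀ t ∈ Icc 0 T, v x t ≤ M)
    (hL : ∀ x, ∀ t ∈ Icc 0 T, dt v x t - a x t * lap (fun y => v y t) x ≤ 0)
    (hinit : ∀ x, v x 0 ≤ S) (ha : ∀ x, ∀ t ∈ Icc 0 T, 0 ≤ a x t)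
    (hH : ContDiff ℝ 2 H) (hHpos : ∀ x, 0 < H x)
    (hHtop : Tendsto H (Bornology.cobounded _) atTop) (hk : 0 ≤ k)
    (hbar : ∀ x, ∀ t ∈ Icc 0 T, a x t * lap H x < k * H x)
    {η : ℝ} (hη : 0 < η) {x : EuclideanSpace ℝ (Fin d)} {t : ℝ} (ht : t ∈ Icc 0 T) :
    v x t ≤ S + η * Real.exp (k * t) * H x := by
  have hw_cont : Continuous
      (fun p : EuclideanSpace ℝ (Fin d) × ℝ => v p.1 p.2 - η * Real.exp (k * p.2) * H p.1) := by
    have := hH.continuous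
    fun_prop
  obtain ⟨R₀, -, hR₀⟩ := Filter.hasBasis_cobounded_norm.eventually_iff.1
    (hHtop.eventually_ge_atTop ((M - S) / η))
  set R := max R₀ ‖x‖
  have hxK : (x, t) ∈ Metric.closedBall 0 R ×ˢ Icc 0 T :=
    ⟨mem_closedBall_zero_iff.2 (le_max_right _ _), ht⟩
  obtain ⟨⟨x₁, t₁⟩, hK, hmax⟩ :=
    ((isCompact_closedBall _ _).prod isCompact_Icc).exists_isMaxOn ⟨_, hxK⟩ hw_cont.continuousOn
  have hx₁ : x₁ ∈ Metric.closedBall 0 R := hK.1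
  have ht₁ : t₁ ∈ Icc 0 T := hK.2
  suffices v x₁ t₁ - η * Real.exp (k * t₁) * H x₁ ≤ S by
    have hle : v x t - η * Real.exp (k * t) * H x ≤ v x₁ t₁ - η * Real.exp (k * t₁) * H x₁ :=
      isMaxOn_iff.1 hmax _ hxK
    linarith
  by_contra! hgt
  have ht₁_pos : 0 < t₁ := by
    refine ht₁.1.lt_of_ne fun h => ?_
    subst h
    rw [mul_zero, Real.exp_zero, mul_one] at hgt
    linarith [hinit x₁, mul_pos hη (hHpos x₁)]
  have hx₁_lt : ‖x₁‖ < R := by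
    refine (mem_closedBall_zero_iff.1 hx₁).lt_of_ne fun h => ?_
    have hHx₁ : (M - S) / η ≤ H x₁ := hR₀ (show R₀ ≤ ‖x₁‖ from h ▸ le_max_left _ _)
    have hexp : 1 ≤ Real.exp (k * t₁) := Real.one_le_exp (mul_nonneg hk ht₁.1)
    have : M - S ≤ η * Real.exp (k * t₁) * H x₁ := by
      rw [div_le_iff₀' hη] at hHx₁
      nlinarith [mul_le_mul_of_nonneg_left hexp (mul_pos hη (hHpos x₁)).le]
    linarith [habove x₁ t₁ ht₁]
  have htime : IsMaxOn (fun s => v x₁ s - η * Real.exp (k * s) * H x₁) (Icc 0 t₁) t₁ :=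
    isMaxOn_iff.2 fun s hs => isMaxOn_iff.1 hmax (x₁, s) ⟨hx₁, hs.1, hs.2.trans ht₁.2⟩
  have hspace : IsLocalMax (fun y => v y t₁ - η * Real.exp (k * t₁) * H y) x₁ := by
    filter_upwards [Metric.isOpen_ball.mem_nhds (mem_ball_zero_iff.2 hx₁_lt)] with y hy
    exact isMaxOn_iff.1 hmax (y, t₁) ⟨Metric.ball_subset_closedBall hy, ht₁⟩
  exact no_interior_max_sub_barrier ha hx2 ht1 hL hH hbar hη ⟨ht₁_pos, ht₁.2⟩ hspace htime

theorem le_of_barrier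
    (hcont : Continuous (fun p : EuclideanSpace ℝ (Fin d) × ℝ => v p.1 p.2))
    (hx2 : ∀ t ∈ Icc 0 T, ContDiff ℝ 2 (fun y => v y t))
    (ht1 : ∀ x, ∀ t ∈ Icc 0 T, DifferentiableAt ℝ (fun s => v x s) t)
    {M : ℝ} (habove : ∀ x, ∀ t ∈ Icc 0 T, v x t ≤ M)
    (hL : ∀ x, ∀ t ∈ Icc 0 T, dt v x t - a x t * lap (fun y => v y t) x ≤ 0)
    (hinit : ∀ x, v x 0 ≤ S) (ha : ∀ x, ∀ t ∈ Icc 0 T, 0 ≤ a x t)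
    (hH : ContDiff ℝ 2 H) (hHpos : ∀ x, 0 < H x)
    (hHtop : Tendsto H (Bornology.cobounded _) atTop)
    (hbar : ∀ x, ∀ t ∈ Icc 0 T, a x t * lap H x ≤ k * H x)
    {x : EuclideanSpace ℝ (Fin d)} {t : ℝ} (ht : t ∈ Icc 0 T) : v x t ≤ S := by
  set k' := max k 0 + 1
  have hstrict : ∀ x, ∀ t ∈ Icc 0 T, a x t * lap H x < k' * H x := fun x t ht =>
    (hbar x t ht).trans_lt (by nlinarith [hHpos x, le_max_left k 0])
  have hH0 := hHpos x
  have hB : 0 < Real.exp (k' * t) * H x := by positivity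
  refine le_of_forall_pos_le_add fun δ hδ => ?_
  calc v x t ≤ S + δ / (Real.exp (k' * t) * H x) * Real.exp (k' * t) * H x :=
        le_add_barrier hcont hx2 ht1 habove hL hinit ha hH hHpos hHtop (by positivity) hstrict
          (by positivity) ht
    _ = S + δ := by field_simp

end MaximumPrinciple

theorem stmt_8_general (d : ℕ) (T : ℝ)
    (a : EuclideanSpace ℝ (Fin d) → ℝ → ℝ) (a0 C : ℝ) (ha0 : 0 < a0)
    (ε : ℝ → ℝ) (hε : Filter.Tendsto ε Filter.atTop (nhds 0))
    (ha : ∀ (x : EuclideanSpace ℝ (Fin d)), ∀ t ∈ Set.Icc 0 T,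
      a0 ≤ a x t ∧ a x t ≤ ε ‖x‖ * ‖x‖ ^ 2 + C)
    (v : EuclideanSpace ℝ (Fin d) → ℝ → ℝ)
    (hcont : Continuous (fun p : EuclideanSpace ℝ (Fin d) × ℝ => v p.1 p.2))
    (hx2 : ∀ t ∈ Set.Icc 0 T, ContDiff ℝ 2 (fun y => v y t))
    (ht1 : ∀ (x : EuclideanSpace ℝ (Fin d)), ∀ t ∈ Set.Icc 0 T,
      DifferentiableAt ℝ (fun s => v x s) t)
    (M : ℝ) (habove : ∀ (x : EuclideanSpace ℝ (Fin d)), ∀ t ∈ Set.Icc 0 T, v x t ≤ M)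
    (hL : ∀ (x : EuclideanSpace ℝ (Fin d)), ∀ t ∈ Set.Icc 0 T,
      dt v x t - a x t * lap (fun y => v y t) x ≤ 0) :
    ∀ (x : EuclideanSpace ℝ (Fin d)), ∀ t ∈ Set.Icc 0 T,
      v x t ≤ ⨆ y : EuclideanSpace ℝ (Fin d), v y 0 := by
  intro x t ht
  have hT0 : (0 : ℝ) ∈ Icc 0 T := ⟨le_rfl, ht.1.trans ht.2⟩
  have hC : 0 ≤ C := by
    have := ha 0 0 hT0
    simp only [norm_zero] at this
    linarith
  obtain ⟨r, hr⟩ := eventually_atTop.1 (hε.eventually (eventually_le_nhds one_pos))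
  have hgrowth : ∀ y, ∀ s ∈ Icc 0 T, max r 0 ^ 2 < ‖y‖ ^ 2 → a y s ≤ ‖y‖ ^ 2 + C := by
    intro y s hs hy
    have hεy : ε ‖y‖ ≤ 1 :=
      hr _ ((le_max_left r 0).trans (lt_of_pow_lt_pow_left₀ 2 (norm_nonneg y) hy).le)
    nlinarith [(ha y s hs).2, sq_nonneg ‖y‖]
  have hinit : ∀ y, v y 0 ≤ ⨆ y, v y 0 :=
    le_ciSup ⟨M, forall_mem_range.2 fun y => habove y 0 hT0⟩
  exact le_of_barrier hcont hx2 ht1 habove hL hinit (fun y s hs => ha0.le.trans (ha y s hs).1)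
    (contDiff_radialBarrier _) (radialBarrier_pos _) (tendsto_radialBarrier _)
    (fun y s hs => mul_lap_radialBarrier_le (sq_nonneg _) hC (hgrowth y s hs)) ht

theorem stmt_8 (d : ℕ) (T : ℝ) (hT : 0 < T)
    (a : EuclideanSpace ℝ (Fin d) → ℝ → ℝ) (a0 C : ℝ) (ha0 : 0 < a0)
    (ε : ℝ → ℝ) (hε : Filter.Tendsto ε Filter.atTop (nhds 0))
    (ha : ∀ (x : EuclideanSpace ℝ (Fin d)), ∀ t ∈ Set.Icc 0 T,
      a0 ≤ a x t ∧ a x t ≤ ε ‖x‖ * ‖x‖ ^ 2 + C)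
    (v : EuclideanSpace ℝ (Fin d) → ℝ → ℝ)
    (hcont : Continuous (fun p : EuclideanSpace ℝ (Fin d) × ℝ => v p.1 p.2))
    (hx2 : ∀ t ∈ Set.Icc 0 T, ContDiff ℝ 2 (fun y => v y t))
    (ht1 : ∀ (x : EuclideanSpace ℝ (Fin d)), ∀ t ∈ Set.Icc 0 T,
      DifferentiableAt ℝ (fun s => v x s) t)
    (M : ℝ) (habove : ∀ (x : EuclideanSpace ℝ (Fin d)), ∀ t ∈ Set.Icc 0 T, v x t ≤ M)
    (hL : ∀ (x : EuclideanSpace ℝ (Fin d)), ∀ t ∈ Set.Icc 0 T,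
      dt v x t - a x t * lap (fun y => v y t) x ≤ 0) :
    ∀ (x : EuclideanSpace ℝ (Fin d)), ∀ t ∈ Set.Icc 0 T,
      v x t ≤ ⨆ y : EuclideanSpace ℝ (Fin d), v y 0 :=
  stmt_8_general d T a a0 C ha0 ε hε ha v hcont hx2 ht1 M habove hL
end

section
/- (Barrier function is a supersolution) Define F_{s,β}(x,t) = (t+1)^{−s} exp(−|x|²/(4β(t+1))) for x ∈ ℝᵈ, t ≥ 0, with constants s, β > 0, and let w = C·F_{s,β} with C > 0. If a coefficient function a(x,t) satisfies 0 < a_0 ≤ a(x,t) ≤ β and s ≤ a_0 d/(2β), then ∂w/∂t − a(x,t) Δw ≥ 0 for all (x,t) with t ≥ 0. -/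
open Real

theorem hasFDerivAt_exp_mul_norm_sq {E : Type*} [NormedAddCommGroup E] [InnerProductSpace ℝ E]
    (c : ℝ) (x : E) :
    HasFDerivAt (fun y => exp (c * ‖y‖ ^ 2)) ((2 * c * exp (c * ‖x‖ ^ 2)) • innerSL ℝ x) x := by
  convert ((hasStrictFDerivAt_norm_sq x).hasFDerivAt.const_mul c).exp using 1
  ext v
  simp only [smul_apply, coe_innerSL_apply, smul_eq_mul, nsmul_eq_mul, Nat.cast_ofNat]
  ring

section Gaussian

variable {d : ℕ} (A c : ℝ) (i : Fin d)

theorem pd_const_mul_exp_mul_norm_sq (x : EuclideanSpace ℝ (Fin d)) :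
    pd (fun y => A * exp (c * ‖y‖ ^ 2)) i x = 2 * c * A * x i * exp (c * ‖x‖ ^ 2) := by
  rw [pd, ((hasFDerivAt_exp_mul_norm_sq c x).const_mul A).fderiv]
  simp only [smul_apply, coe_innerSL_apply, EuclideanSpace.inner_single_right, ringHom_apply,
    one_mul, smul_eq_mul]
  ring

theorem pd_pd_const_mul_exp_mul_norm_sq (x : EuclideanSpace ℝ (Fin d)) :
    pd (fun y => pd (fun z => A * exp (c * ‖z‖ ^ 2)) i y) i x
      = A * (4 * c ^ 2 * x i ^ 2 + 2 * c) * exp (c * ‖x‖ ^ 2) := by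
  have hcoord : HasFDerivAt (fun y : EuclideanSpace ℝ (Fin d) => 2 * c * A * y i)
      ((2 * c * A) • EuclideanSpace.proj i) x :=
    (EuclideanSpace.proj (𝕜 := ℝ) i).hasFDerivAt.const_mul _
  rw [funext (pd_const_mul_exp_mul_norm_sq A c i), pd,
    (hcoord.fun_mul (hasFDerivAt_exp_mul_norm_sq c x)).fderiv]
  simp only [add_apply, smul_apply, coe_innerSL_apply, EuclideanSpace.inner_single_right,
    ringHom_apply, one_mul, smul_eq_mul, PiLp.proj_apply, PiLp.single_eq_same, mul_one]
  ring

theorem lap_const_mul_exp_mul_norm_sq (x : EuclideanSpace ℝ (Fin d)) :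
    lap (fun y => A * exp (c * ‖y‖ ^ 2)) x
      = A * (4 * c ^ 2 * ‖x‖ ^ 2 + 2 * c * d) * exp (c * ‖x‖ ^ 2) := by
  simp only [lap, pd_pd_const_mul_exp_mul_norm_sq, ← Finset.sum_mul, ← Finset.mul_sum,
    Finset.sum_add_distrib, ← EuclideanSpace.real_norm_sq_eq, Finset.sum_const,
    Finset.card_univ, Fintype.card_fin, nsmul_eq_mul]
  ring

end Gaussian

noncomputable def heatBarrier {d : ℕ} (s β : ℝ) (x : EuclideanSpace ℝ (Fin d)) (t : ℝ) : ℝ :=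
  (t + 1) ^ (-s) * exp (-‖x‖ ^ 2 / (4 * β * (t + 1)))

section HeatBarrier

variable {d : ℕ} (s β : ℝ)

theorem hasDerivAt_heatBarrier {t : ℝ} (ht : 0 < t + 1) (x : EuclideanSpace ℝ (Fin d)) :
    HasDerivAt (heatBarrier s β x)
      (heatBarrier s β x t * (-s / (t + 1) + ‖x‖ ^ 2 / (4 * β * (t + 1) ^ 2))) t := by
  have hshift : HasDerivAt (fun τ : ℝ => τ + 1) 1 t := (hasDerivAt_id t).add_const 1
  have hpow := hshift.rpow_const (p := -s) (Or.inl ht.ne')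
  have hexp : HasDerivAt (fun τ : ℝ => exp (-‖x‖ ^ 2 / (4 * β) * (τ + 1)⁻¹))
      (exp (-‖x‖ ^ 2 / (4 * β) * (t + 1)⁻¹) * (-‖x‖ ^ 2 / (4 * β) * (-1 / (t + 1) ^ 2))) t :=
    ((hshift.inv ht.ne').const_mul _).exp
  have hfun : heatBarrier s β x
      = fun τ => (τ + 1) ^ (-s) * exp (-‖x‖ ^ 2 / (4 * β) * (τ + 1)⁻¹) := by
    ext τ
    rw [heatBarrier, ← div_div, div_eq_mul_inv _ (τ + 1)]
  rw [hfun]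
  refine (hpow.mul hexp).congr_deriv ?_
  rw [rpow_sub ht, rpow_one]
  field_simp

theorem heatBarrier_pos {t : ℝ} (ht : 0 < t + 1) (x : EuclideanSpace ℝ (Fin d)) :
    0 < heatBarrier s β x t :=
  mul_pos (rpow_pos_of_pos ht _) (exp_pos _)

theorem lap_const_mul_heatBarrier (C t : ℝ) (x : EuclideanSpace ℝ (Fin d)) :
    lap (fun y => C * heatBarrier s β y t) x
      = C * heatBarrier s β x t
        * (‖x‖ ^ 2 / (4 * β ^ 2 * (t + 1) ^ 2) - d / (2 * β * (t + 1))) := by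
  have hgauss : ∀ y : EuclideanSpace ℝ (Fin d), C * heatBarrier s β y t
      = C * (t + 1) ^ (-s) * exp (-1 / (4 * β * (t + 1)) * ‖y‖ ^ 2) := fun y => by
    rw [heatBarrier, div_mul_eq_mul_div, neg_one_mul]; ring
  rw [funext hgauss, lap_const_mul_exp_mul_norm_sq, hgauss]
  -- `ring` treats the inverse of a sum as an atom, so split the inverses of products first.
  simp only [div_eq_mul_inv, mul_inv, inv_pow, mul_pow]
  ring

end HeatBarrier

theorem stmt_10_general (d : ℕ) (s β : ℝ) (hβ : 0 < β)
    (F : EuclideanSpace ℝ (Fin d) → ℝ → ℝ)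
    (hF : ∀ x t, F x t = (t + 1) ^ (-s) * Real.exp (-‖x‖ ^ 2 / (4 * β * (t + 1))))
    (C : ℝ) (hC : 0 < C)
    (w : EuclideanSpace ℝ (Fin d) → ℝ → ℝ) (hw : ∀ x t, w x t = C * F x t)
    (a : EuclideanSpace ℝ (Fin d) → ℝ → ℝ) (a0 : ℝ)
    (ha : ∀ (x : EuclideanSpace ℝ (Fin d)) (t : ℝ), a0 ≤ a x t ∧ a x t ≤ β)
    (hsd : s ≤ a0 * d / (2 * β)) :
    ∀ (x : EuclideanSpace ℝ (Fin d)), ∀ t : ℝ, 0 ≤ t →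
      0 ≤ dt w x t - a x t * lap (fun y => w y t) x := by
  intro x t ht
  have ht1 : 0 < t + 1 := by linarith
  have hw_eq : w = fun y τ => C * heatBarrier s β y τ := by
    ext y τ
    rw [hw, hF, heatBarrier]
  have hdt : dt w x t
      = C * heatBarrier s β x t * (-s / (t + 1) + ‖x‖ ^ 2 / (4 * β * (t + 1) ^ 2)) := by
    rw [dt, hw_eq, ((hasDerivAt_heatBarrier s β ht1 x).const_mul C).deriv]
    ring
  obtain ⟨ha0_le, ha_le_β⟩ := ha x t
  have hsa : 2 * s * β ≤ d * a x t := by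
    rw [le_div_iff₀ (by positivity)] at hsd
    nlinarith [Nat.cast_nonneg (α := ℝ) d]
  rw [hdt, hw_eq, lap_const_mul_heatBarrier]
  calc (0 : ℝ) ≤ C * heatBarrier s β x t * (‖x‖ ^ 2 / (4 * β ^ 2 * (t + 1) ^ 2) * (β - a x t)
        + (d * a x t - 2 * s * β) / (2 * β * (t + 1))) := by
        have := heatBarrier_pos s β ht1 x
        have : 0 ≤ β - a x t := by linarith
        have : 0 ≤ d * a x t - 2 * s * β := by linarith
        positivity
    _ = _ := by field_simp; ring

theorem stmt_10 (d : ℕ) (s β : ℝ) (hs : 0 < s) (hβ : 0 < β)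
    (F : EuclideanSpace ℝ (Fin d) → ℝ → ℝ)
    (hF : ∀ x t, F x t = (t + 1) ^ (-s) * Real.exp (-‖x‖ ^ 2 / (4 * β * (t + 1))))
    (C : ℝ) (hC : 0 < C)
    (w : EuclideanSpace ℝ (Fin d) → ℝ → ℝ) (hw : ∀ x t, w x t = C * F x t)
    (a : EuclideanSpace ℝ (Fin d) → ℝ → ℝ) (a0 : ℝ) (ha0 : 0 < a0)
    (ha : ∀ (x : EuclideanSpace ℝ (Fin d)) (t : ℝ), a0 ≤ a x t ∧ a x t ≤ β)
    (hsd : s ≤ a0 * d / (2 * β)) :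
    ∀ (x : EuclideanSpace ℝ (Fin d)), ∀ t : ℝ, 0 ≤ t →
      0 ≤ dt w x t - a x t * lap (fun y => w y t) x :=
  stmt_10_general d s β hβ F hF C hC w hw a a0 ha hsd
end
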